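/- arXiv:2105.14045 — 6 statements merged into one kernel-verified Lean document; each statement's English description precedes it below -/
import Mathlib

section
/- Let Z : X × Y → 𝒵. A set A ⊆ X × Y can be written as A = {(x,y) : y ∈ C_{Z(x,y)}} for some set-valued function C : 𝒵 → 2^Y if and only if for each y ∈ Y the function x ↦ Z(x,y) is injective. -/
/-! Membership in `{p | p.2 ∈ C (Z p)}` depends only on `(Z p, p.2)`, so a singleton `{(x, y)}` is
representable only if no other `x'` has `Z (x', y) = Z (x, y)`. Conversely, under injectivity
`C z := Prod.snd '' (A ∩ Z ⁻¹' {z})` represents `A`, since `(Z p, p.2)` determines `p`. -/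

open Function Set

section

variable {X Y 𝒵 : Type*}

theorem mem_setOf_snd_mem_iff_of_eq {Z : X × Y → 𝒵} (C : 𝒵 → Set Y) {p q : X × Y}
    (hZ : Z p = Z q) (h₂ : p.2 = q.2) :
    p ∈ {r : X × Y | r.2 ∈ C (Z r)} ↔ q ∈ {r : X × Y | r.2 ∈ C (Z r)} := by
  simp only [mem_ofPred_eq, hZ, h₂]

theorem injective_of_forall_exists_eq_setOf {Z : X × Y → 𝒵}
    (h : ∀ A : Set (X × Y), ∃ C : 𝒵 → Set Y, A = {p : X × Y | p.2 ∈ C (Z p)}) (y : Y) :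
    Injective fun x => Z (x, y) := by
  intro x₁ x₂ hZ
  obtain ⟨C, hC⟩ := h {(x₂, y)}
  have hx₁ : (x₁, y) ∈ ({(x₂, y)} : Set (X × Y)) := by
    rw [hC, mem_setOf_snd_mem_iff_of_eq C hZ rfl, ← hC]
    exact mem_singleton _
  simpa using hx₁

theorem eq_setOf_snd_mem_image_inter_preimage {Z : X × Y → 𝒵}
    (hZ : ∀ y : Y, Injective fun x => Z (x, y)) (A : Set (X × Y)) :
    A = {p : X × Y | p.2 ∈ Prod.snd '' (A ∩ Z ⁻¹' {Z p})} := by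
  ext ⟨x, y⟩
  refine ⟨fun hA => ⟨(x, y), ⟨hA, rfl⟩, rfl⟩, ?_⟩
  rintro ⟨⟨x', y'⟩, ⟨hA, hZx'⟩, rfl : y' = y⟩
  rwa [← hZ y' hZx']

end

/-- Every `A ⊆ X × Y` can be written as `{(x,y) : y ∈ C (Z (x,y))}` for some set-valued
function `C : 𝒵 → Set Y` if and only if `x ↦ Z (x,y)` is injective for each `y`. -/
theorem faulkenberry_representation_iff {X Y 𝒵 : Type*} (Z : X × Y → 𝒵) :
    (∀ A : Set (X × Y), ∃ C : 𝒵 → Set Y, A = {p : X × Y | p.2 ∈ C (Z p)}) ↔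
      ∀ y : Y, Function.Injective (fun x => Z (x, y)) :=
  ⟨injective_of_forall_exists_eq_setOf, fun hZ A =>
    ⟨fun z => Prod.snd '' (A ∩ Z ⁻¹' {z}), eq_setOf_snd_mem_image_inter_preimage hZ A⟩⟩
end

section
/- Let Z : X × Y → 𝒵. A set A ⊆ X × Y can be written as A = {(x,y) : x ∈ B_{Z(x,y)}} for some set-valued function B : 𝒵 → 2^X if and only if for each x ∈ X the function y ↦ Z(x,y) is injective. -/
/-!
A set of the form `{p | p.1 ∈ B (Z p)}` contains `(x, y)` or not according to the value
`Z (x, y)` alone, so it cannot separate two points of a slice `{x} × Y` on which `Z` agrees;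
representing a singleton therefore forces every `Z_x` to be injective. Conversely, if every
`Z_x` is injective, `B z := Prod.fst '' (A ∩ Z ⁻¹' {z})` represents `A`, since `(x, y)` is the
only point of the slice over `x` with value `Z (x, y)`.
-/

section

variable {X Y 𝒵 : Type*} {Z : X × Y → 𝒵}

theorem injective_slice_of_forall_exists_rep
    (h : ∀ A : Set (X × Y), ∃ B : 𝒵 → Set X, A = {p : X × Y | p.1 ∈ B (Z p)}) (x : X) :
    Function.Injective (fun y => Z (x, y)) := by
  intro y₁ y₂ hZ
  obtain ⟨B, hB⟩ := h {(x, y₂)}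
  have hy₂ : x ∈ B (Z (x, y₂)) := by
    simpa using hB.subset (Set.mem_singleton (x, y₂))
  have hy₁ : (x, y₁) ∈ ({(x, y₂)} : Set (X × Y)) := by
    rw [hB]
    simpa [show Z (x, y₁) = Z (x, y₂) from hZ] using hy₂
  exact (Prod.mk.inj hy₁).2

theorem exists_rep_of_injective_slice (hZ : ∀ x : X, Function.Injective (fun y => Z (x, y)))
    (A : Set (X × Y)) : ∃ B : 𝒵 → Set X, A = {p : X × Y | p.1 ∈ B (Z p)} := by
  refine ⟨fun z => Prod.fst '' (A ∩ Z ⁻¹' {z}), ?_⟩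
  ext ⟨x, y⟩
  constructor
  · intro hA
    exact ⟨(x, y), ⟨hA, rfl⟩, rfl⟩
  · rintro ⟨⟨x', y'⟩, ⟨hA, hZxy⟩, rfl : x' = x⟩
    rwa [hZ x' hZxy] at hA

end

/-- Every `A ⊆ X × Y` can be written as `{(x,y) : x ∈ B (Z (x,y))}` for some set-valued
function `B : 𝒵 → Set X` if and only if `y ↦ Z (x,y)` is injective for each `x`. -/
theorem faulkenberry_representation_iff' {X Y 𝒵 : Type*} (Z : X × Y → 𝒵) :
    (∀ A : Set (X × Y), ∃ B : 𝒵 → Set X, A = {p : X × Y | p.1 ∈ B (Z p)}) ↔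
      ∀ x : X, Function.Injective (fun y => Z (x, y)) :=
  ⟨injective_slice_of_forall_exists_rep, exists_rep_of_injective_slice⟩
end

section
/- Let Z be a boundedly complete statistic with regular conditional probability {P_z} common to all P_θ. If A is measurable with P_θ(A) = 1 − α for all θ ∈ Θ, then P_z(A) = 1 − α for ν_θ-almost all z, for every θ ∈ Θ. -/
/-! Taking `H = 𝒵` in the disintegration shows that `z ↦ P_z(A)` is a measurable function with
values in `[0, 1]` whose `ν_θ`-integral is `P_θ(A) = 1 - α` for every `θ`; bounded completeness
then forces it to equal `1 - α` `ν_θ`-almost everywhere. -/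

open MeasureTheory
open scoped ENNReal

def IsBoundedlyComplete {Θ 𝒵 : Type*} [MeasurableSpace 𝒵] (ν : Θ → Measure 𝒵) : Prop :=
  ∀ f : 𝒵 → ℝ, Measurable f → (∃ M, ∀ z, |f z| ≤ M) →
    ∀ c : ℝ, (∀ θ, ∫ z, f z ∂ν θ = c) → ∀ θ, ∀ᵐ z ∂ν θ, f z = c

namespace IsBoundedlyComplete

variable {Θ 𝒵 : Type*} [MeasurableSpace 𝒵] {ν : Θ → Measure 𝒵}

theorem ae_eq_of_lintegral_eq (hν : IsBoundedlyComplete ν) {g : 𝒵 → ℝ≥0∞}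
    (hg : Measurable g) {C : ℝ≥0∞} (hC : C ≠ ⊤) (hgC : ∀ z, g z ≤ C)
    {p : ℝ≥0∞} (hp : p ≠ ⊤) (hgp : ∀ θ, ∫⁻ z, g z ∂ν θ = p) :
    ∀ θ, ∀ᵐ z ∂ν θ, g z = p := by
  have hg_fin : ∀ z, g z ≠ ⊤ := fun z => ne_top_of_le_ne_top hC (hgC z)
  have hbdd : ∃ M, ∀ z, |(g z).toReal| ≤ M :=
    ⟨C.toReal, fun z => by
      rw [abs_of_nonneg ENNReal.toReal_nonneg]
      exact ENNReal.toReal_mono hC (hgC z)⟩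
  have hint : ∀ θ, ∫ z, (g z).toReal ∂ν θ = p.toReal := fun θ => by
    rw [integral_toReal hg.aemeasurable (.of_forall fun z => (hg_fin z).lt_top), hgp θ]
  intro θ
  filter_upwards [hν _ hg.ennreal_toReal hbdd _ hint θ] with z hz
  exact (ENNReal.toReal_eq_toReal_iff' (hg_fin z) hp).mp hz

end IsBoundedlyComplete

theorem lintegral_map_eq_of_disintegration {Ω 𝒵 : Type*} [MeasurableSpace Ω]
    [MeasurableSpace 𝒵] {μ : Measure Ω} {Z : Ω → 𝒵} {Pz : 𝒵 → Measure Ω} {A : Set Ω}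
    (hdisint : ∀ H : Set 𝒵, MeasurableSet H → μ (A ∩ Z ⁻¹' H) = ∫⁻ z in H, Pz z A ∂μ.map Z) :
    ∫⁻ z, Pz z A ∂μ.map Z = μ A := by
  simpa using (hdisint Set.univ .univ).symm

theorem bounded_complete_constant_conditional_coverage_general {Ω 𝒵 Θ : Type*}
    [MeasurableSpace Ω] [MeasurableSpace 𝒵]
    (P : Θ → Measure Ω)
    (Z : Ω → 𝒵)
    (Pz : 𝒵 → Measure Ω) (hPzprob : ∀ z, IsProbabilityMeasure (Pz z))
    (hPzmeas : ∀ A : Set Ω, MeasurableSet A → Measurable fun z => Pz z A)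
    (hdisint : ∀ θ, ∀ A : Set Ω, MeasurableSet A → ∀ H : Set 𝒵, MeasurableSet H →
      P θ (A ∩ Z ⁻¹' H) = ∫⁻ z in H, Pz z A ∂((P θ).map Z))
    (hcomplete : ∀ f : 𝒵 → ℝ, Measurable f → (∃ M, ∀ z, |f z| ≤ M) →
      ∀ c : ℝ, (∀ θ, ∫ z, f z ∂((P θ).map Z) = c) →
        ∀ θ, ∀ᵐ z ∂((P θ).map Z), f z = c)
    (α : ℝ)
    (A : Set Ω) (hA : MeasurableSet A)
    (hcov : ∀ θ, P θ A = ENNReal.ofReal (1 - α)) :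
    ∀ θ, ∀ᵐ z ∂((P θ).map Z), Pz z A = ENNReal.ofReal (1 - α) :=
  IsBoundedlyComplete.ae_eq_of_lintegral_eq hcomplete (hPzmeas A hA) ENNReal.one_ne_top
    (fun _ => prob_le_one) ENNReal.ofReal_ne_top fun θ => by
      rw [lintegral_map_eq_of_disintegration (hdisint θ A hA), hcov θ]

/-- If `A` has constant coverage `1 - α` under every `P θ`, then its conditional
probability given a boundedly complete statistic `Z` equals `1 - α` almost surely. -/
theorem bounded_complete_constant_conditional_coverage {Ω 𝒵 Θ : Type*}
    [MeasurableSpace Ω] [MeasurableSpace 𝒵]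
    (P : Θ → Measure Ω) (hPprob : ∀ θ, IsProbabilityMeasure (P θ))
    (Z : Ω → 𝒵) (hZ : Measurable Z)
    (Pz : 𝒵 → Measure Ω) (hPzprob : ∀ z, IsProbabilityMeasure (Pz z))
    (hPzmeas : ∀ A : Set Ω, MeasurableSet A → Measurable fun z => Pz z A)
    (hdisint : ∀ θ, ∀ A : Set Ω, MeasurableSet A → ∀ H : Set 𝒵, MeasurableSet H →
      P θ (A ∩ Z ⁻¹' H) = ∫⁻ z in H, Pz z A ∂((P θ).map Z))
    (hcomplete : ∀ f : 𝒵 → ℝ, Measurable f → (∃ M, ∀ z, |f z| ≤ M) →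
      ∀ c : ℝ, (∀ θ, ∫ z, f z ∂((P θ).map Z) = c) →
        ∀ θ, ∀ᵐ z ∂((P θ).map Z), f z = c)
    (α : ℝ) (hα : α ∈ Set.Icc (0 : ℝ) 1)
    (A : Set Ω) (hA : MeasurableSet A)
    (hcov : ∀ θ, P θ A = ENNReal.ofReal (1 - α)) :
    ∀ θ, ∀ᵐ z ∂((P θ).map Z), Pz z A = ENNReal.ofReal (1 - α) :=
  bounded_complete_constant_conditional_coverage_general P Z Pz hPzprob hPzmeas hdisint hcomplete α
    A hA hcov
end

section
/- Let {ν_θ : θ ∈ Θ} be a family of probability measures on (𝒵, ℋ) such that for every ε > 0 and every set H ∈ ℋ that is non-null for the family (i.e., ν_θ(H) > 0 for some θ), there exists θ_ε ∈ Θ with ν_{θ_ε}(H) > 1 − ε. Then for any bounded measurable function h : 𝒵 → ℝ with ∫ h dν_θ ≥ 0 for all θ ∈ Θ, it holds that h(z) ≥ 0 for ν_θ-almost all z, for every θ ∈ Θ. -/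
/-!
If `h < 0` on a `ν θ`-non-null set, then `h ≤ -δ` on a non-null set `H` for some `δ > 0`.
Choosing `θ'` with `ν θ' H > 1 - δ / (M + δ)`, where `|h| ≤ M`, the mass `-δ` on `H` outweighs
the at most `M` on the complement, so `∫ h ∂ν θ' < 0`.
-/

open MeasureTheory

namespace MeasureTheory

variable {α : Type*} [MeasurableSpace α] {μ : Measure α} {f : α → ℝ} {H : Set α} {M δ : ℝ}

theorem ae_nonneg_of_forall_measure_le_neg_eq_zero
    (hf : ∀ δ : ℝ, 0 < δ → μ {z | f z ≤ -δ} = 0) : ∀ᵐ z ∂μ, 0 ≤ f z := by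
  have h_gt : ∀ n : ℕ, ∀ᵐ z ∂μ, -(1 / ((n : ℝ) + 1)) < f z := fun n =>
    ae_iff.2 (by simpa only [not_lt] using hf _ Nat.one_div_pos_of_nat)
  filter_upwards [ae_all_iff.2 h_gt] with z hz
  by_contra! hneg
  obtain ⟨n, hn⟩ := exists_nat_one_div_lt (neg_pos.2 hneg)
  linarith [hz n]

theorem integral_le_sub_mul_measureReal_of_le_neg_on [IsFiniteMeasure μ]
    (hf : Integrable f μ) (hM : ∀ z, f z ≤ M) (hH : MeasurableSet H) (hδ : ∀ z ∈ H, f z ≤ -δ) :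
    ∫ z, f z ∂μ ≤ M * μ.real Set.univ - (M + δ) * μ.real H := by
  have h_le : ∀ z, f z ≤ M - (M + δ) * H.indicator 1 z := fun z => by
    by_cases hz : z ∈ H
    · simp only [Set.indicator_of_mem hz, Pi.one_apply]; linarith [hδ z hz]
    · simp only [Set.indicator_of_notMem hz]; linarith [hM z]
  have h_ind : Integrable (H.indicator (1 : α → ℝ)) μ := (integrable_const (1 : ℝ)).indicator hH
  calc ∫ z, f z ∂μ ≤ ∫ z, (M - (M + δ) * H.indicator 1 z) ∂μ :=
        integral_mono hf ((integrable_const M).sub (h_ind.const_mul (M + δ))) h_le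
    _ = M * μ.real Set.univ - (M + δ) * μ.real H := by
        rw [integral_sub (integrable_const M) (h_ind.const_mul (M + δ)), integral_const_mul,
          integral_indicator_one hH, integral_const, smul_eq_mul, mul_comm]

theorem integral_neg_of_le_neg_on_of_lt_measureReal [IsProbabilityMeasure μ]
    (hf : Integrable f μ) (hM : ∀ z, f z ≤ M) (hH : MeasurableSet H) (hδ : ∀ z ∈ H, f z ≤ -δ)
    (hMδ : 0 < M + δ) (hconc : 1 - δ / (M + δ) < μ.real H) : ∫ z, f z ∂μ < 0 :=
  calc ∫ z, f z ∂μ ≤ M * μ.real Set.univ - (M + δ) * μ.real H :=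
        integral_le_sub_mul_measureReal_of_le_neg_on hf hM hH hδ
    _ < M * 1 - (M + δ) * (1 - δ / (M + δ)) := by rw [probReal_univ]; gcongr
    _ = 0 := by field_simp; ring

end MeasureTheory

/-- If the family `{ν θ}` contains measures arbitrarily concentrated on every non-null set,
then any bounded measurable `h` with nonnegative integral under every `ν θ` is nonnegative
`ν θ`-almost everywhere, for every `θ`. -/
theorem concentration_implies_ae_nonneg {𝒵 Θ : Type*} [MeasurableSpace 𝒵]
    (ν : Θ → Measure 𝒵) (hν : ∀ θ, IsProbabilityMeasure (ν θ))
    (hconc : ∀ ε : ℝ, 0 < ε → ∀ H : Set 𝒵, MeasurableSet H → (∃ θ, 0 < ν θ H) →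
      ∃ θ', ENNReal.ofReal (1 - ε) < ν θ' H)
    (h : 𝒵 → ℝ) (hmeas : Measurable h) (hbdd : ∃ M, ∀ z, |h z| ≤ M)
    (hint : ∀ θ, 0 ≤ ∫ z, h z ∂(ν θ)) :
    ∀ θ, ∀ᵐ z ∂(ν θ), 0 ≤ h z := by
  intro θ
  by_contra h_not
  obtain ⟨M, hM⟩ := hbdd
  obtain ⟨δ, hδ, hH_pos⟩ : ∃ δ : ℝ, 0 < δ ∧ ν θ {z | h z ≤ -δ} ≠ 0 := by
    contrapose! h_not
    exact ae_nonneg_of_forall_measure_le_neg_eq_zero h_not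
  set H := {z | h z ≤ -δ}
  have hH : MeasurableSet H := hmeas measurableSet_Iic
  obtain ⟨z₀, -⟩ := nonempty_of_measure_ne_zero hH_pos
  have hM_nonneg : 0 ≤ M := (abs_nonneg _).trans (hM z₀)
  have hMδ : 0 < M + δ := by linarith
  obtain ⟨θ', hθ'⟩ := hconc (δ / (M + δ)) (by positivity) H hH ⟨θ, pos_iff_ne_zero.2 hH_pos⟩
  have h_ε_le : δ / (M + δ) ≤ 1 := (div_le_one hMδ).2 (by linarith)
  rw [ENNReal.ofReal_lt_iff_lt_toReal (by linarith) (measure_ne_top _ _)] at hθ'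
  have h_int : Integrable h (ν θ') :=
    (integrable_const M).mono' hmeas.aestronglyMeasurable (ae_of_all _ hM)
  exact (integral_neg_of_le_neg_on_of_lt_measureReal h_int (fun z => (abs_le.1 (hM z)).2) hH
    (fun _ hz => hz) hMδ hθ').not_ge (hint θ')
end

section
/- For any function δ : ℝ → ℝ, the set A = {(x,y) ∈ ℝ² : |(x−y)/(σ√(k+1)) + δ(Z(x,y))|² < χ²_{1, δ(Z(x,y))², 1−α}} satisfies P_θ(A) = 1 − α for every θ ∈ ℝ, where X ~ N(θ, kσ²) and Y ~ N(θ, σ²) are independent and Z(x,y) = (x + ky)/(1+k). -/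
/-!
Write `W = (X - Y) / (σ √(k+1))` and `Z = (X + k Y) / (1 + k)`. Both are linear combinations of the
independent Gaussians `X, Y`, so `(W, Z)` is jointly Gaussian, and
`Cov(W, Z) ∝ k σ² - k σ² = 0`; hence `W` and `Z` are independent, with `W ~ N(0,1)`. Conditionally
on `Z = z` the event is `{(W + δ z)² < q (δ z²)}`, of probability `1 - α` by the choice of `q`, and
integrating over the law of `Z` gives `1 - α`.

Since `q` is an arbitrary function, the event is first rewritten as
`N(0,1)(ball (-δ Z) |W + δ Z|) < 1 - α`, which is measurable in `(W, Z)`; the two descriptions agree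
because the Gaussian mass of a ball is strictly increasing in its radius.
-/

open MeasureTheory ProbabilityTheory Real Set Metric
open scoped ENNReal NNReal

lemma measurable_measure_ball {α : Type*} [PseudoMetricSpace α] [MeasurableSpace α]
    [OpensMeasurableSpace α] [SecondCountableTopology α] (ν : Measure α) [SFinite ν] :
    Measurable fun p : α × ℝ => ν (ball p.1 p.2) :=
  measurable_measure_prodMk_left
    (measurableSet_lt (f := fun q : (α × ℝ) × α => dist q.2 q.1.1) (g := fun q => q.1.2)
      (by fun_prop) (by fun_prop))

lemma strictMonoOn_measure_ball {ν : Measure ℝ} [IsFiniteMeasure ν] (hν : volume ≪ ν) (x : ℝ) :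
    StrictMonoOn (fun s => ν (ball x s)) (Ici 0) := by
  rintro s (hs : 0 ≤ s) t - hst
  have hgap : ν (ball x t \ ball x s) ≠ 0 := by
    have hIoo : volume (Ioo (x + s) (x + t)) ≠ 0 := by simp [Real.volume_Ioo, hst]
    refine fun h0 => hIoo (hν (measure_mono_null (fun y hy => ?_) h0))
    simp only [mem_Ioo] at hy
    simp only [Real.ball_eq_Ioo, mem_sdiff, mem_Ioo, not_and_or, not_lt]
    exact ⟨⟨by linarith, hy.2⟩, Or.inr hy.1.le⟩
  calc ν (ball x s) < ν (ball x s) + ν (ball x t \ ball x s) :=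
        ENNReal.lt_add_right (measure_ne_top _ _) hgap
    _ = ν (ball x t) := by
        rw [measure_add_sdiff measurableSet_ball.nullMeasurableSet,
          union_eq_right.mpr (ball_subset_ball hst.le)]

lemma sq_sub_lt_iff_measure_ball_lt {ν : Measure ℝ} [IsFiniteMeasure ν] (hν : volume ≪ ν)
    {x r : ℝ} {c : ℝ≥0∞} (hc : ν {z | (z - x) ^ 2 < r} = c) (y : ℝ) :
    (y - x) ^ 2 < r ↔ ν (ball x |y - x|) < c := by
  rcases le_or_gt r 0 with hr | hr
  · have hempty : {z | (z - x) ^ 2 < r} = ∅ :=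
      eq_empty_of_forall_notMem fun z hz => (hr.trans (sq_nonneg _)).not_gt hz
    rw [hempty, measure_empty] at hc
    simp [← hc, hr.trans (sq_nonneg _)]
  · have hball : {z | (z - x) ^ 2 < r} = ball x √r := by
      ext z
      rw [mem_ball, Real.dist_eq, lt_sqrt (abs_nonneg _), sq_abs, mem_ofPred_eq]
    rw [hball] at hc
    rw [← hc, ← sq_abs, ← lt_sqrt (abs_nonneg _)]
    exact ((strictMonoOn_measure_ball hν x).lt_iff_lt (mem_Ici.mpr (abs_nonneg _))
      (mem_Ici.mpr (sqrt_nonneg _))).symm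

lemma ProbabilityTheory.aemeasurable_of_map_eq_gaussianReal {Ω : Type*} [MeasurableSpace Ω]
    {P : Measure Ω} {X : Ω → ℝ} {m : ℝ} {v : ℝ≥0} (hX : P.map X = gaussianReal m v) :
    AEMeasurable X P :=
  aemeasurable_of_map_neZero (by rw [hX]; infer_instance)

namespace ProbabilityTheory.IndepFun

lemma measure_preimage_eq_of_measure_slice_eq {Ω α β : Type*} [MeasurableSpace Ω]
    [MeasurableSpace α] [MeasurableSpace β] {P : Measure Ω} [IsProbabilityMeasure P]
    {W : Ω → α} {Z : Ω → β} (hW : AEMeasurable W P) (hZ : AEMeasurable Z P)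
    (hWZ : IndepFun W Z P) {S : Set (α × β)} (hS : MeasurableSet S) {c : ℝ≥0∞}
    (hslice : ∀ z, P.map W {w | (w, z) ∈ S} = c) :
    P ((fun ω => (W ω, Z ω)) ⁻¹' S) = c := by
  rw [← Measure.map_apply_of_aemeasurable (hW.prodMk hZ) hS,
    (indepFun_iff_map_prod_eq_prod_map_map hW hZ).mp hWZ, Measure.prod_apply_symm hS]
  have := P.isProbabilityMeasure_map hZ
  simp [preimage, hslice]

variable {Ω : Type*} [MeasurableSpace Ω] {P : Measure Ω} {X Y : Ω → ℝ}

lemma covariance_linComb [IsFiniteMeasure P] (hXY : IndepFun X Y P)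
    (hX : MemLp X 2 P) (hY : MemLp Y 2 P) (a b c d : ℝ) :
    cov[fun ω => a * X ω + b * Y ω, fun ω => c * X ω + d * Y ω; P] =
      a * c * Var[X; P] + b * d * Var[Y; P] := by
  have hcovXY := hXY.covariance_eq_zero hX hY
  change cov[(fun ω => a * X ω) + (fun ω => b * Y ω),
    (fun ω => c * X ω) + (fun ω => d * Y ω); P] = _
  rw [covariance_add_left (hX.const_mul a) (hY.const_mul b)
      ((hX.const_mul c).add (hY.const_mul d)),
    covariance_add_right (hX.const_mul a) (hX.const_mul c) (hY.const_mul d),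
    covariance_add_right (hY.const_mul b) (hX.const_mul c) (hY.const_mul d)]
  simp only [covariance_const_mul_left, covariance_const_mul_right, covariance_comm Y X, hcovXY,
    covariance_self hX.aemeasurable, covariance_self hY.aemeasurable]
  ring

variable {m₁ m₂ : ℝ} {v₁ v₂ : ℝ≥0}

lemma map_linComb_eq_gaussianReal (hXY : IndepFun X Y P)
    (hX : P.map X = gaussianReal m₁ v₁) (hY : P.map Y = gaussianReal m₂ v₂) (a b : ℝ) :
    P.map (fun ω => a * X ω + b * Y ω) =
      gaussianReal (a * m₁ + b * m₂)
        (.mk (a ^ 2) (sq_nonneg a) * v₁ + .mk (b ^ 2) (sq_nonneg b) * v₂) := by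
  have hXm := aemeasurable_of_map_eq_gaussianReal hX
  have hYm := aemeasurable_of_map_eq_gaussianReal hY
  refine gaussianReal_add_gaussianReal_of_indepFun
    (hXY.comp (measurable_const_mul a) (measurable_const_mul b)) ?_ ?_
  · rw [← Function.comp_def (a * ·), ← AEMeasurable.map_map_of_aemeasurable (by fun_prop) hXm,
      hX, gaussianReal_map_const_mul]
  · rw [← Function.comp_def (b * ·), ← AEMeasurable.map_map_of_aemeasurable (by fun_prop) hYm,
      hY, gaussianReal_map_const_mul]

lemma indepFun_linComb_of_gaussianReal (hXY : IndepFun X Y P)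
    (hX : P.map X = gaussianReal m₁ v₁) (hY : P.map Y = gaussianReal m₂ v₂) {a b c d : ℝ}
    (horth : a * c * v₁ + b * d * v₂ = 0) :
    IndepFun (fun ω => a * X ω + b * Y ω) (fun ω => c * X ω + d * Y ω) P := by
  have hXm := aemeasurable_of_map_eq_gaussianReal hX
  have hYm := aemeasurable_of_map_eq_gaussianReal hY
  have hXg : HasGaussianLaw X P := ⟨by rw [hX]; infer_instance⟩
  have hYg : HasGaussianLaw Y P := ⟨by rw [hY]; infer_instance⟩
  have := hXg.isProbabilityMeasure
  let L : ℝ × ℝ →L[ℝ] ℝ × ℝ :=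
    (a • ContinuousLinearMap.fst ℝ ℝ ℝ + b • ContinuousLinearMap.snd ℝ ℝ ℝ).prod
      (c • ContinuousLinearMap.fst ℝ ℝ ℝ + d • ContinuousLinearMap.snd ℝ ℝ ℝ)
  have hpair : HasGaussianLaw (fun ω => (a * X ω + b * Y ω, c * X ω + d * Y ω)) P :=
    (hXY.hasGaussianLaw hXg hYg).map_fun L
  refine hpair.indepFun_of_covariance_eq_zero ?_
  rw [hXY.covariance_linComb hXg.memLp_two hYg.memLp_two, ← variance_id_map hXm,
    ← variance_id_map hYm, hX, hY, variance_id_gaussianReal, variance_id_gaussianReal, horth]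

variable {θ : ℝ} {σ2 k : ℝ≥0}

lemma map_sub_div_eq_gaussianReal_zero_one (hXY : IndepFun X Y P)
    (hX : P.map X = gaussianReal θ (k * σ2)) (hY : P.map Y = gaussianReal θ σ2) (hσ : 0 < σ2) :
    P.map (fun ω => (X ω - Y ω) / (√σ2 * √((k : ℝ) + 1))) = gaussianReal 0 1 := by
  set s := √(σ2 : ℝ) * √((k : ℝ) + 1)
  have hs : s ^ 2 = σ2 * (k + 1) := by
    rw [mul_pow, sq_sqrt σ2.coe_nonneg, sq_sqrt (by positivity)]
  have hs0 : s ≠ 0 := by positivity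
  clear_value s
  have hlin : (fun ω => (X ω - Y ω) / s) = fun ω => s⁻¹ * X ω + -s⁻¹ * Y ω := by
    funext ω
    ring
  rw [hlin, hXY.map_linComb_eq_gaussianReal hX hY]
  congr 1
  · ring
  ext
  push_cast
  field_simp
  linear_combination -hs

lemma indepFun_sub_div_weightedMean (hXY : IndepFun X Y P)
    (hX : P.map X = gaussianReal θ (k * σ2)) (hY : P.map Y = gaussianReal θ σ2) (s : ℝ) :
    IndepFun (fun ω => (X ω - Y ω) / s) (fun ω => (X ω + k * Y ω) / (1 + (k : ℝ))) P := by
  have hW : (fun ω => (X ω - Y ω) / s) = fun ω => s⁻¹ * X ω + -s⁻¹ * Y ω := by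
    funext ω
    ring
  have hZ : (fun ω => (X ω + k * Y ω) / (1 + (k : ℝ))) =
      fun ω => (1 + (k : ℝ))⁻¹ * X ω + k / (1 + (k : ℝ)) * Y ω := by
    funext ω
    ring
  rw [hW, hZ]
  exact hXY.indepFun_linComb_of_gaussianReal hX hY (by push_cast; ring)

end ProbabilityTheory.IndepFun

/-- `q ncp` models the `1 − α` quantile of the noncentral `χ²₁(ncp)` law, which is the law of
`(W + d)²` for `W ~ N(0,1)` and `ncp = d²`. -/
theorem fab_gaussian_constant_coverage_general {Ω : Type*} [MeasurableSpace Ω]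
    (μ : Measure Ω) [IsProbabilityMeasure μ]
    (σ2 k : NNReal) (hσ : 0 < σ2)
    (α : ℝ)
    (q : ℝ → ℝ)
    (hq : ∀ d : ℝ, gaussianReal 0 1 {w | (w + d) ^ 2 < q (d ^ 2)} = ENNReal.ofReal (1 - α))
    (δ : ℝ → ℝ) (hδ : Measurable δ)
    (θ : ℝ) (X Y : Ω → ℝ)
    (hindep : IndepFun X Y μ)
    (hX : μ.map X = gaussianReal θ (k * σ2))
    (hY : μ.map Y = gaussianReal θ σ2) :
    μ {ω | ((X ω - Y ω) / (Real.sqrt σ2 * Real.sqrt ((k : ℝ) + 1)) +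
          δ ((X ω + (k : ℝ) * Y ω) / (1 + (k : ℝ)))) ^ 2 <
        q (δ ((X ω + (k : ℝ) * Y ω) / (1 + (k : ℝ))) ^ 2)} = ENNReal.ofReal (1 - α) := by
  have hW := hindep.map_sub_div_eq_gaussianReal_zero_one hX hY hσ
  have hWZ := hindep.indepFun_sub_div_weightedMean hX hY (√σ2 * √((k : ℝ) + 1))
  have hiff : ∀ d w, (w + d) ^ 2 < q (d ^ 2) ↔
      gaussianReal 0 1 (ball (-d) |w + d|) < ENNReal.ofReal (1 - α) := fun d w => by
    simpa using sq_sub_lt_iff_measure_ball_lt (gaussianReal_absolutelyContinuous' 0 one_ne_zero)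
      (x := -d) (by simpa using hq d) w
  have hXm := aemeasurable_of_map_eq_gaussianReal hX
  have hYm := aemeasurable_of_map_eq_gaussianReal hY
  have hS : MeasurableSet
      {p : ℝ × ℝ | gaussianReal 0 1 (ball (-δ p.2) |p.1 + δ p.2|) < ENNReal.ofReal (1 - α)} :=
    measurableSet_lt ((measurable_measure_ball _).comp
      (f := fun p : ℝ × ℝ => (-δ p.2, |p.1 + δ p.2|)) (by fun_prop)) measurable_const
  simp only [hiff]
  exact hWZ.measure_preimage_eq_of_measure_slice_eq (by fun_prop) (by fun_prop) hS fun z => by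
    simp only [hW, mem_ofPred_eq, ← hiff, hq]

/-- Constant `1 − α` coverage of the prediction set built from any function `δ` and the
noncentral chi-squared quantile: here `q ncp` denotes the `1 − α` quantile of the
noncentral `χ²₁` distribution with noncentrality parameter `ncp`, characterized by the
hypothesis `hq` (the noncentral `χ²₁(d²)` law being the law of `(W + d)²`, `W ~ N(0,1)`). -/
theorem fab_gaussian_constant_coverage {Ω : Type*} [MeasurableSpace Ω]
    (μ : Measure Ω) [IsProbabilityMeasure μ]
    (σ2 k : NNReal) (hσ : 0 < σ2) (hk : 0 < k)
    (α : ℝ) (hα : α ∈ Set.Ioo (0 : ℝ) 1)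
    (q : ℝ → ℝ)
    (hq : ∀ d : ℝ, gaussianReal 0 1 {w | (w + d) ^ 2 < q (d ^ 2)} = ENNReal.ofReal (1 - α))
    (δ : ℝ → ℝ) (hδ : Measurable δ)
    (θ : ℝ) (X Y : Ω → ℝ) (hmX : Measurable X) (hmY : Measurable Y)
    (hindep : IndepFun X Y μ)
    (hX : μ.map X = gaussianReal θ (k * σ2))
    (hY : μ.map Y = gaussianReal θ σ2) :
    μ {ω | ((X ω - Y ω) / (Real.sqrt σ2 * Real.sqrt ((k : ℝ) + 1)) +
          δ ((X ω + (k : ℝ) * Y ω) / (1 + (k : ℝ)))) ^ 2 <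
        q (δ ((X ω + (k : ℝ) * Y ω) / (1 + (k : ℝ))) ^ 2)} = ENNReal.ofReal (1 - α) :=
  fab_gaussian_constant_coverage_general μ σ2 k hσ α q hq δ hδ θ X Y hindep hX hY
end

section
/- Factorization under sufficiency transfers to conditional densities: suppose dP_θ/d(λ×μ) = h_θ(Z(x,y))·g(x,y) for all θ, where Z : X×Y → 𝒵 has countable fibers under counting-measure domination (discrete case), and y ↦ Z(x,y) is injective for each x. Then the conditional density of X given Z = z satisfies p_z^X(x) = g(x, Z_x⁻¹(z))/c_z for a normalizing constant c_z, so that on the event Z(x,y) = z, g(x,y) = c_z · p_z^X(x). -/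
/-! On the fibre `Z = z` the factor `h θ (Z x y) = h θ z` is constant, so it pulls out of the
normalizing sum `∑_{Z(x',y') = z} p θ x' y' = h θ z * c z`, where `c z` is the sum of `g` over
that fibre. Injectivity of `Z x` leaves a single term, `p θ x y = h θ z * g x y`, in the
numerator, and `h θ z` cancels. -/

open Function

theorem tsum_ite_comp_eq_of_injective {α β M : Type*} [AddCommMonoid M] [TopologicalSpace M]
    [DecidableEq β] {f : α → β} (hf : Injective f) (a : α → M) (x : α) :
    ∑' y, (if f y = f x then a y else 0) = a x := by
  rw [tsum_eq_single x (fun y hy => if_neg (hf.ne hy)), if_pos rfl]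

theorem tsum_ite_comp_mul {α β R : Type*} [DivisionSemiring R] [TopologicalSpace R]
    [IsTopologicalSemiring R] [T2Space R] [DecidableEq β]
    (F : α → β) (k : β → R) (g : α → R) (z : β) :
    ∑' a, (if F a = z then k (F a) * g a else 0) = k z * ∑' a, if F a = z then g a else 0 := by
  rw [← tsum_mul_left]
  congr 1 with a
  split_ifs with ha
  · rw [ha]
  · rw [mul_zero]

theorem discrete_sufficiency_conditional_density_general {X Y 𝒵 Θ : Type*}
    [DecidableEq 𝒵]
    (Z : X → Y → 𝒵) (hinj : ∀ x, Function.Injective (Z x))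
    (p : Θ → X → Y → ℝ) (h : Θ → 𝒵 → ℝ) (g : X → Y → ℝ)
    (hfact : ∀ θ x y, p θ x y = h θ (Z x y) * g x y) :
    ∃ c : 𝒵 → ℝ, ∀ θ x y,
      (∑' q : X × Y, if Z q.1 q.2 = Z x y then p θ q.1 q.2 else 0) ≠ 0 →
      ((∑' y', if Z x y' = Z x y then p θ x y' else 0) /
          (∑' q : X × Y, if Z q.1 q.2 = Z x y then p θ q.1 q.2 else 0)
        = g x y / c (Z x y)) ∧
      g x y = c (Z x y) *
        ((∑' y', if Z x y' = Z x y then p θ x y' else 0) /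
          (∑' q : X × Y, if Z q.1 q.2 = Z x y then p θ q.1 q.2 else 0)) := by
  set c : 𝒵 → ℝ := fun z => ∑' q : X × Y, if Z q.1 q.2 = z then g q.1 q.2 else 0
  refine ⟨c, fun θ x y hne => ?_⟩
  have hden : (∑' q : X × Y, if Z q.1 q.2 = Z x y then p θ q.1 q.2 else 0)
      = h θ (Z x y) * c (Z x y) := by
    simp only [hfact]
    exact tsum_ite_comp_mul (fun q : X × Y => Z q.1 q.2) (h θ) (uncurry g) (Z x y)
  have hnum : (∑' y', if Z x y' = Z x y then p θ x y' else 0) = h θ (Z x y) * g x y := by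
    rw [tsum_ite_comp_eq_of_injective (hinj x), hfact]
  rw [hden] at hne ⊢
  have hratio : h θ (Z x y) * g x y / (h θ (Z x y) * c (Z x y)) = g x y / c (Z x y) :=
    mul_div_mul_left _ _ (left_ne_zero_of_mul hne)
  rw [hnum, hratio]
  exact ⟨rfl, (mul_div_cancel₀ _ (right_ne_zero_of_mul hne)).symm⟩

/-- Discrete factorization under sufficiency transfers to conditional densities: if
`p θ x y = h θ (Z x y) * g x y` with `h θ > 0`, `g ≥ 0`, and `y ↦ Z x y` injective for
each `x`, then there is a normalizing function `c` such that the conditional pmf of `X`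
given `Z = z` equals `g x y / c z` (when `Z x y = z`), i.e. `g x y = c z * p_z^X x`. -/
theorem discrete_sufficiency_conditional_density {X Y 𝒵 Θ : Type*}
    [Countable X] [Countable Y] [DecidableEq 𝒵]
    (Z : X → Y → 𝒵) (hinj : ∀ x, Function.Injective (Z x))
    (p : Θ → X → Y → ℝ) (h : Θ → 𝒵 → ℝ) (g : X → Y → ℝ)
    (hfact : ∀ θ x y, p θ x y = h θ (Z x y) * g x y)
    (hpos : ∀ θ z, 0 < h θ z) (hg : ∀ x y, 0 ≤ g x y)
    (hsum : ∀ θ, Summable fun q : X × Y => p θ q.1 q.2) :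
    ∃ c : 𝒵 → ℝ, ∀ θ x y,
      (∑' q : X × Y, if Z q.1 q.2 = Z x y then p θ q.1 q.2 else 0) ≠ 0 →
      ((∑' y', if Z x y' = Z x y then p θ x y' else 0) /
          (∑' q : X × Y, if Z q.1 q.2 = Z x y then p θ q.1 q.2 else 0)
        = g x y / c (Z x y)) ∧
      g x y = c (Z x y) *
        ((∑' y', if Z x y' = Z x y then p θ x y' else 0) /
          (∑' q : X × Y, if Z q.1 q.2 = Z x y then p θ q.1 q.2 else 0)) :=
  discrete_sufficiency_conditional_density_general Z hinj p h g hfact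
end
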